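/- For n ≥ 3, there exists a tournament on n vertices whose monitoring arc-geodetic number equals n − 1; hence mag^-(K_n) = n − 1. Explicitly, the tournament with arcs v_i → v_j for all 1 ≤ i < j ≤ n−1, arcs v_n → v_i for 1 ≤ i ≤ n−2, and the arc v_{n-1} → v_n, has {v_1,...,v_{n-1}} as a monitoring arc-geodetic set. -/

import Mathlib

namespace MAG

variable {V : Type*}

/-- Directed walk from `x` to `y` whose list of visited vertices is `l`. -/
inductive DWalk (A : V → V → Prop) : V → V → List V → Prop
  | nil (v : V) : DWalk A v v [v]
  | cons {u v w : V} {l : List V} (h : A u v) (p : DWalk A v w l) :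
      DWalk A u w (u :: l)

/-- The arc `(a, b)` lies on the walk with vertex list `l`. -/
def ArcOn (a b : V) (l : List V) : Prop :=
  ∃ l₁ l₂ : List V, l = l₁ ++ a :: b :: l₂

/-- `l` is (the vertex list of) a shortest directed walk from `x` to `y`. -/
def IsShortest (A : V → V → Prop) (x y : V) (l : List V) : Prop :=
  DWalk A x y l ∧ ∀ l' : List V, DWalk A x y l' → l.length ≤ l'.length

/-- `x` and `y` monitor the arc `(a, b)`: the arc lies on every shortest
directed path from `x` to `y` (and such a path exists), or symmetrically
from `y` to `x`. -/
def Monitors (A : V → V → Prop) (x y a b : V) : Prop :=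
  ((∃ l, IsShortest A x y l) ∧ ∀ l, IsShortest A x y l → ArcOn a b l) ∨
  ((∃ l, IsShortest A y x l) ∧ ∀ l, IsShortest A y x l → ArcOn a b l)

/-- A monitoring arc-geodetic set of the digraph `A`. -/
def IsMAGSet (A : V → V → Prop) (M : Set V) : Prop :=
  ∀ a b : V, A a b → ∃ x ∈ M, ∃ y ∈ M, x ≠ y ∧ Monitors A x y a b

/-- The monitoring arc-geodetic number of the digraph `A`. -/
noncomputable def mag (A : V → V → Prop) [Fintype V] : ℕ :=
  sInf {n | ∃ M : Finset V, IsMAGSet A (M : Set V) ∧ M.card = n}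

/-- `A` is an orientation of the undirected simple graph `G`. -/
structure IsOrientation (G : SimpleGraph V) (A : V → V → Prop) : Prop where
  adj_iff : ∀ u v : V, G.Adj u v ↔ (A u v ∨ A v u)
  asymm : ∀ u v : V, A u v → ¬ A v u

/-- The lower monitoring arc-geodetic number of `G`. -/
noncomputable def magMinus (G : SimpleGraph V) [Fintype V] : ℕ :=
  sInf {n | ∃ A : V → V → Prop, IsOrientation G A ∧ mag A = n}

/-- The upper monitoring arc-geodetic number of `G`. -/
noncomputable def magPlus (G : SimpleGraph V) [Fintype V] : ℕ :=
  sSup {n | ∃ A : V → V → Prop, IsOrientation G A ∧ mag A = n}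

/-- A source: a vertex with no in-neighbours. -/
def IsSource (A : V → V → Prop) (v : V) : Prop := ∀ w, ¬ A w v

/-- A sink: a vertex with no out-neighbours. -/
def IsSink (A : V → V → Prop) (v : V) : Prop := ∀ w, ¬ A v w

/-- An oriented graph: no loops and no pair of opposite arcs. -/
def IsOrientedGraph (A : V → V → Prop) : Prop :=
  (∀ v, ¬ A v v) ∧ ∀ u v : V, A u v → ¬ A v u

/-- The underlying undirected graph of `A` is connected. -/
def IsConnectedDigraph (A : V → V → Prop) : Prop :=
  ∀ x y : V, Relation.ReflTransGen (fun a b => A a b ∨ A b a) x y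


/-!
Let `(s, t)` be an arc on every shortest path from `p` to `q` in a tournament, with `p ≠ s`.
Shortcutting a shortest path shows that `t → p` and that every in-neighbour of `t` other than `s`
beats `p` as well. If `u → v` with both `u` and `v` outside a monitoring set `M`, monitoring the
arcs leaving `v` over and over produces members of `M`, all beaten by `v`, whose
in-neighbourhoods strictly grow, which is impossible in a finite tournament. So every tournament
on `n` vertices has `mag ≥ n - 1`. In the explicit tournament the vertex `n - 2` has `n - 1` as
its only out-neighbour, so pairs `(n - 2, y)` monitor the arcs leaving `n - 2` and `n - 1`; every
other arc is monitored by its own ends.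
-/

namespace DWalk

variable {A : V → V → Prop} {x y a : V} {l : List V}

theorem head_eq (h : DWalk A x y (a :: l)) : a = x := by
  cases h <;> rfl

theorem one_le_length (h : DWalk A x y l) : 1 ≤ l.length := by
  cases h <;> simp

theorem two_le_length (h : DWalk A x y l) (hxy : x ≠ y) : 2 ≤ l.length := by
  cases h with
  | nil => exact absurd rfl hxy
  | cons _ p => simpa using p.one_le_length

theorem eq_pair (h : DWalk A x y l) (hl : l.length = 2) : l = [x, y] ∧ A x y := by
  cases h with
  | nil => simp at hl
  | cons hxv p =>
    cases p with
    | nil => exact ⟨rfl, hxv⟩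
    | cons _ p => have := p.one_le_length; simp only [List.length_cons] at hl; omega

theorem eq_triple (h : DWalk A x y l) (hl : l.length = 3) :
    ∃ m, l = [x, m, y] ∧ A x m ∧ A m y := by
  cases h with
  | nil => simp at hl
  | cons hxv p =>
    cases p with
    | nil => simp at hl
    | cons hvw p =>
      cases p with
      | nil => exact ⟨_, rfl, hxv, hvw⟩
      | cons _ p => have := p.one_le_length; simp only [List.length_cons] at hl; omega

theorem exists_tail {c : V} (h : DWalk A x y (c :: l)) (hl : l ≠ []) :
    ∃ v, A x v ∧ DWalk A v y l := by
  cases h with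
  | nil => exact absurd rfl hl
  | cons hxv p => exact ⟨_, hxv, p⟩

theorem suffix (l₁ : List V) {l₂ : List V} (h : DWalk A x y (l₁ ++ a :: l₂)) :
    DWalk A a y (a :: l₂) := by
  induction l₁ generalizing x with
  | nil => obtain rfl := h.head_eq; exact h
  | cons c l₁ ih =>
    obtain ⟨v, -, p⟩ := h.exists_tail (by simp)
    exact ih p

theorem splice (l₁ : List V) {l₂ l₃ : List V} (h : DWalk A x y (l₁ ++ a :: l₂))
    (h' : DWalk A a y (a :: l₃)) : DWalk A x y (l₁ ++ a :: l₃) := by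
  induction l₁ generalizing x with
  | nil => obtain rfl := h.head_eq; exact h'
  | cons c l₁ ih =>
    obtain rfl := h.head_eq
    obtain ⟨v, hxv, p⟩ := h.exists_tail (by simp)
    exact .cons hxv (ih p)

end DWalk

theorem arcOn_cons_cons (a b : V) (l : List V) : ArcOn a b (a :: b :: l) := ⟨[], l, rfl⟩

theorem ArcOn.of_cons {a b x : V} {l : List V} (h : ArcOn a b (x :: l)) (hxa : x ≠ a) :
    ArcOn a b l := by
  obtain ⟨_ | ⟨c, l₁⟩, l₂, heq⟩ := h
  · exact absurd (List.cons.inj heq).1 hxa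
  · exact ⟨l₁, l₂, (List.cons.inj heq).2⟩

theorem ArcOn.mem_tail {a b x : V} {l : List V} (h : ArcOn a b (x :: l)) : b ∈ l := by
  obtain ⟨_ | ⟨c, l₁⟩, l₂, heq⟩ := h <;> simp_all

section Digraph

variable {A : V → V → Prop}

namespace IsShortest

variable {x y : V} {l : List V}

theorem of_length_le {l' : List V} (h : IsShortest A x y l) (h' : DWalk A x y l')
    (hle : l'.length ≤ l.length) : IsShortest A x y l' :=
  ⟨h', fun l'' hl'' => hle.trans (h.2 l'' hl'')⟩

theorem not_mem_tail {a : V} {l₁ l₂ : List V} (h : IsShortest A x y (l₁ ++ a :: l₂)) :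
    a ∉ l₂ := by
  intro ha
  obtain ⟨X, Y, rfl⟩ := List.append_of_mem ha
  have hW : DWalk A x y ((l₁ ++ a :: X) ++ a :: Y) := by simpa using h.1
  have := h.2 _ (h.1.splice l₁ (hW.suffix _))
  simp only [List.length_append, List.length_cons] at this
  omega

theorem start_ne_and_not_adj {p q s t : V} (hW : IsShortest A p q l) (hst : ArcOn s t l)
    (hps : p ≠ s) : p ≠ t ∧ ¬ A p t := by
  obtain ⟨l₁, l₂, rfl⟩ := hst
  have hl₁ : 0 < l₁.length :=
    List.length_pos_iff.2 (by rintro rfl; exact hps hW.1.head_eq.symm)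
  have ht : DWalk A t q (t :: l₂) := DWalk.suffix (l₁ ++ [s]) (by simpa using hW.1)
  constructor
  · rintro rfl
    have := hW.2 _ ht
    simp only [List.length_append, List.length_cons] at this
    omega
  · intro hpt
    have := hW.2 _ (.cons hpt ht)
    simp only [List.length_append, List.length_cons] at this
    omega

end IsShortest

/-- An out-neighbour `ξ` of `p` with `ξ → t` would give a shortest path `p ξ t …`, on which the
arc `(s, t)` could only occur after `t`, repeating `t`. -/
theorem eq_of_forall_arcOn {p q s t ξ : V} (hex : ∃ l, IsShortest A p q l)
    (hall : ∀ l, IsShortest A p q l → ArcOn s t l) (hps : p ≠ s) (hpξ : A p ξ)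
    (hξt : A ξ t) : ξ = s := by
  obtain ⟨W, hW⟩ := hex
  obtain ⟨l₁, l₂, rfl⟩ := hall W hW
  have hl₁ : 0 < l₁.length :=
    List.length_pos_iff.2 (by rintro rfl; exact hps hW.1.head_eq.symm)
  have ht : DWalk A t q (t :: l₂) := DWalk.suffix (l₁ ++ [s]) (by simpa using hW.1)
  have hW' : IsShortest A p q ([p, ξ] ++ t :: l₂) :=
    hW.of_length_le (.cons hpξ (.cons hξt ht))
      (by simp only [List.length_append, List.length_cons, List.length_nil]; omega)
  by_contra hξs
  exact hW'.not_mem_tail (((hall _ hW').of_cons hps).of_cons hξs).mem_tail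

theorem isShortest_pair {a b : V} (h : A a b) (hab : a ≠ b) : IsShortest A a b [a, b] :=
  ⟨.cons h (.nil b), fun _ hl => hl.two_le_length hab⟩

theorem monitors_self_of_adj {a b : V} (h : A a b) (hab : a ≠ b) : Monitors A a b a b := by
  refine .inl ⟨⟨_, isShortest_pair h hab⟩, fun l hl => ?_⟩
  have hle : l.length ≤ 2 := hl.2 _ (isShortest_pair h hab).1
  have hge := hl.1.two_le_length hab
  rw [(hl.1.eq_pair (by omega)).1]
  exact arcOn_cons_cons a b []

theorem isMAGSet_univ (hirr : ∀ v, ¬ A v v) : IsMAGSet A Set.univ := fun a b h =>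
  have hab : a ≠ b := by rintro rfl; exact hirr a h
  ⟨a, trivial, b, trivial, hab, monitors_self_of_adj h hab⟩

theorem monitors_of_unique_succ {x m y : V} (hxm : A x m) (hmy : A m y)
    (hsucc : ∀ m', A x m' → m' = m) (hxy : x ≠ y) (hym : y ≠ m) :
    Monitors A x y x m ∧ Monitors A x y m y := by
  have hW : IsShortest A x y [x, m, y] := by
    refine ⟨.cons hxm (.cons hmy (.nil y)), fun l hl => ?_⟩
    by_contra! hlt
    have := hl.two_le_length hxy
    simp only [List.length_cons, List.length_nil] at hlt
    exact hym (hsucc y (hl.eq_pair (by omega)).2)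
  have hall : ∀ l, IsShortest A x y l → l = [x, m, y] := by
    intro l hl
    obtain ⟨m', rfl, hxm', -⟩ := hl.1.eq_triple (le_antisymm (hl.2 _ hW.1) (hW.2 _ hl.1))
    rw [hsucc m' hxm']
  exact ⟨.inl ⟨⟨_, hW⟩, fun l hl => hall l hl ▸ arcOn_cons_cons x m [y]⟩,
    .inl ⟨⟨_, hW⟩, fun l hl => hall l hl ▸ ⟨[x], [], rfl⟩⟩⟩

end Digraph

section Tournament

variable {A : V → V → Prop}

theorem IsOrientation.irrefl {G : SimpleGraph V} (hA : IsOrientation G A) (v : V) : ¬ A v v :=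
  fun h => hA.asymm v v h h

theorem IsOrientation.adj_or_adj (hA : IsOrientation ⊤ A) {x y : V} (hxy : x ≠ y) :
    A x y ∨ A y x :=
  (hA.adj_iff x y).1 hxy

theorem IsOrientation.dominates_of_forall_arcOn (hA : IsOrientation ⊤ A) {p q s t : V}
    (hps : p ≠ s) (hex : ∃ l, IsShortest A p q l)
    (hall : ∀ l, IsShortest A p q l → ArcOn s t l) :
    A t p ∧ ∀ ξ, A ξ t → ξ ≠ s → A ξ p := by
  obtain ⟨W, hW⟩ := hex
  obtain ⟨hpt, hnpt⟩ := hW.start_ne_and_not_adj (hall W hW) hps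
  refine ⟨(hA.adj_or_adj (Ne.symm hpt)).resolve_right hnpt, fun ξ hξt hξs => ?_⟩
  have hξp : ξ ≠ p := by rintro rfl; exact hnpt hξt
  exact (hA.adj_or_adj hξp).resolve_right
    fun hpξ => hξs (eq_of_forall_arcOn ⟨W, hW⟩ hall hps hpξ hξt)

theorem IsMAGSet.exists_dominating (hA : IsOrientation ⊤ A) {M : Set V} (hM : IsMAGSet A M)
    {a c : V} (hac : A a c) (ha : a ∉ M) :
    ∃ p ∈ M, A c p ∧ ∀ ξ, A ξ c → ξ ≠ a → A ξ p := by
  obtain ⟨x, hx, y, hy, -, hxy | hyx⟩ := hM a c hac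
  · exact ⟨x, hx, hA.dominates_of_forall_arcOn (ne_of_mem_of_not_mem hx ha) hxy.1 hxy.2⟩
  · exact ⟨y, hy, hA.dominates_of_forall_arcOn (ne_of_mem_of_not_mem hy ha) hyx.1 hyx.2⟩

theorem IsMAGSet.subsingleton_compl [Finite V] (hA : IsOrientation ⊤ A) {M : Set V}
    (hM : IsMAGSet A M) : Mᶜ.Subsingleton := by
  suffices h : ∀ u v, u ∉ M → v ∉ M → ¬ A u v by
    intro u hu v hv
    by_contra huv
    rcases hA.adj_or_adj huv with huv | hvu
    exacts [h u v hu hv huv, h v u hv hu hvu]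
  intro u v hu hv huv
  set S := {c | c ∈ M ∧ A v c ∧ ∀ ξ, A ξ v → ξ ≠ u → A ξ c}
  obtain ⟨c, ⟨-, hvc, hc⟩, hmax⟩ := S.exists_max_image (fun c => {ξ | A ξ c}.ncard)
    S.toFinite (hM.exists_dominating hA huv hu)
  obtain ⟨p, hpM, hcp, hdom⟩ := hM.exists_dominating hA hvc hv
  have hpv : p ≠ v := ne_of_mem_of_not_mem hpM hv
  have hvp : A v p := (hA.adj_or_adj hpv.symm).resolve_right fun hpv' =>
    hA.irrefl p (hdom p (hc p hpv' (ne_of_mem_of_not_mem hpM hu)) hpv)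
  have hpS : p ∈ S := ⟨hpM, hvp, fun ξ hξv hξu =>
    hdom ξ (hc ξ hξv hξu) (by rintro rfl; exact hA.irrefl ξ hξv)⟩
  have hlt : {ξ | A ξ c}.ncard < {ξ | A ξ p}.ncard := by
    refine Set.ncard_lt_ncard (LE.le.ssubset_of_not_superset (fun ξ hξ => ?_)
      fun hsub => hA.irrefl c (hsub hcp))
    by_cases hξv : ξ = v
    · exact hξv ▸ hvp
    · exact hdom ξ hξ hξv
  exact (hmax p hpS).not_gt hlt

variable [Fintype V]

theorem IsMAGSet.card_sub_one_le (hA : IsOrientation ⊤ A) {M : Finset V}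
    (hM : IsMAGSet A M) : Fintype.card V - 1 ≤ M.card := by
  classical
  have hcompl : Mᶜ.card ≤ 1 := Finset.card_le_one.2 fun u hu v hv =>
    hM.subsingleton_compl hA (by simpa using hu) (by simpa using hv)
  have := Finset.card_compl M
  omega

theorem card_sub_one_le_mag (hA : IsOrientation ⊤ A) : Fintype.card V - 1 ≤ mag A :=
  le_csInf ⟨_, Finset.univ, by simpa using isMAGSet_univ hA.irrefl, rfl⟩
    (by rintro _ ⟨M, hM, rfl⟩; exact hM.card_sub_one_le hA)

theorem mag_eq_card_sub_one (hA : IsOrientation ⊤ A) {M : Finset V} (hM : IsMAGSet A M)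
    (hcard : M.card = Fintype.card V - 1) : mag A = Fintype.card V - 1 :=
  le_antisymm (hcard ▸ Nat.sInf_le ⟨M, hM, rfl⟩) (card_sub_one_le_mag hA)

theorem magMinus_top_eq (hA : IsOrientation ⊤ A) (hmag : mag A = Fintype.card V - 1) :
    magMinus (⊤ : SimpleGraph V) = Fintype.card V - 1 :=
  le_antisymm (Nat.sInf_le ⟨A, hA, hmag⟩)
    (le_csInf ⟨_, A, hA, hmag⟩ (by rintro _ ⟨B, hB, rfl⟩; exact card_sub_one_le_mag hB))

end Tournament

/-- The tournament of the statement, with 0-based vertices: the paper's `v_k` is `k - 1`. -/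
def nearTransitive (n : ℕ) (i j : Fin n) : Prop :=
  (i.val < j.val ∧ j.val ≤ n - 2) ∨ (i.val = n - 1 ∧ j.val ≤ n - 3) ∨
    (i.val = n - 2 ∧ j.val = n - 1)

section NearTransitive

variable {n : ℕ}

theorem isOrientation_nearTransitive (hn : 3 ≤ n) :
    IsOrientation (⊤ : SimpleGraph (Fin n)) (nearTransitive n) where
  adj_iff u v := by
    simp only [SimpleGraph.top_adj, ne_eq, Fin.ext_iff, nearTransitive]
    omega
  asymm u v := by
    simp only [nearTransitive]
    omega

theorem isMAGSet_nearTransitive (hn : 3 ≤ n) :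
    IsMAGSet (nearTransitive n) {i | i.val ≤ n - 2} := by
  obtain ⟨w, hw⟩ : ∃ w : Fin n, w.val = n - 2 := ⟨⟨n - 2, by omega⟩, rfl⟩
  obtain ⟨z, hz⟩ : ∃ z : Fin n, z.val = n - 1 := ⟨⟨n - 1, by omega⟩, rfl⟩
  obtain ⟨o, ho⟩ : ∃ o : Fin n, o.val = 0 := ⟨⟨0, by omega⟩, rfl⟩
  have hwz : nearTransitive n w z := Or.inr (Or.inr ⟨hw, hz⟩)
  have hsucc : ∀ m, nearTransitive n w m → m = z := by
    intro m hm
    simp only [nearTransitive] at hm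
    ext
    omega
  intro a b hab
  rcases id hab with ⟨hlt, hb⟩ | ⟨ha, hb⟩ | ⟨ha, hb⟩
  · exact ⟨a, (hlt.trans_le hb).le, b, hb, Fin.ne_of_lt hlt,
      monitors_self_of_adj hab (Fin.ne_of_lt hlt)⟩
  · obtain rfl : a = z := Fin.ext (ha.trans hz.symm)
    refine ⟨w, hw.le, b, show b.val ≤ n - 2 by omega, ?_,
      (monitors_of_unique_succ hwz hab hsucc ?_ ?_).2⟩ <;>
      simp only [ne_eq, Fin.ext_iff] <;> omega
  · obtain rfl : a = w := Fin.ext (ha.trans hw.symm)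
    obtain rfl : b = z := Fin.ext (hb.trans hz.symm)
    have hzo : nearTransitive n b o := Or.inr (Or.inl ⟨hz, by omega⟩)
    refine ⟨a, hw.le, o, show o.val ≤ n - 2 by omega, ?_,
      (monitors_of_unique_succ hwz hzo hsucc ?_ ?_).1⟩ <;>
      simp only [ne_eq, Fin.ext_iff] <;> omega

end NearTransitive

/-- for `n ≥ 3` there is a tournament on `n` vertices with
`mag = n - 1`; hence `mag⁻(K_n) = n - 1`.  Explicitly (0-based), the
tournament with arcs `i → j` for `i < j ≤ n - 2`, arcs `(n-1) → i` for
`i ≤ n - 3`, and the arc `(n-2) → (n-1)`, has the first `n - 1` vertices as a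
MAG-set. -/
theorem tournament_mag_eq_card_sub_one (n : ℕ) (hn : 3 ≤ n) :
    IsMAGSet (fun i j : Fin n =>
        (i.val < j.val ∧ j.val ≤ n - 2) ∨
        (i.val = n - 1 ∧ j.val ≤ n - 3) ∨
        (i.val = n - 2 ∧ j.val = n - 1))
      {i : Fin n | i.val ≤ n - 2} ∧
    mag (fun i j : Fin n =>
        (i.val < j.val ∧ j.val ≤ n - 2) ∨
        (i.val = n - 1 ∧ j.val ≤ n - 3) ∨
        (i.val = n - 2 ∧ j.val = n - 1)) = n - 1 ∧
    magMinus (⊤ : SimpleGraph (Fin n)) = n - 1 := by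
  have hT := isOrientation_nearTransitive hn
  have hM := isMAGSet_nearTransitive hn
  have hmag : mag (nearTransitive n) = Fintype.card (Fin n) - 1 :=
    mag_eq_card_sub_one hT (M := Finset.Iic ⟨n - 2, by omega⟩)
      (by convert hM; ext; simp [Fin.le_def])
      (by simp only [Fin.card_Iic, Fintype.card_fin]; omega)
  have hcard : Fintype.card (Fin n) - 1 = n - 1 := by rw [Fintype.card_fin]
  exact ⟨hM, hmag.trans hcard, (magMinus_top_eq hT hmag).trans hcard⟩

end MAG
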